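/- Fix a row y₀ and write V̂ = V̂_{y₀} = S_{𝟙_{Γ̃_{y₀}}}, and let Ψ = ∑_{k=0}^{M−1} V̂^k Φ_M (the unnormalized ℤ_M topological cat state). Let T ≥ 3, let x_1, …, x_T ∈ ZMod L_x be distinct columns, and let a : Fin T → {0,1,…,M−1} be an input with M dividing ∑_j a_j; set q = (∑_j a_j)/M ∈ ℤ. Then the post-strategy state ψ' = (∏_j Ŵ_{x_j}^{−a_j/M}) Ψ equals ∑_{k=0}^{M−1} ω^{−k·q} V̂^k Φ_M, is nonzero, and satisfies V̂ ψ' = ω^{q} ψ'; hence the quantum strategy wins the ℤ_M toric code game with certainty. -/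

import Mathlib

open Finset

noncomputable section

/-- The qudit Hilbert space: complex functions on configurations `ι → ZMod M`. -/
abbrev QuditSpace (ι : Type*) (M : ℕ) := (ι → ZMod M) → ℂ

/-- The root of unity `ω = exp(2πi/M)`. -/
def omegaM (M : ℕ) : ℂ := Complex.exp (2 * Real.pi * Complex.I / M)

/-- The clock operator `C_u`: `(C_u ψ)(σ) = ω^{∑_b u(b)·σ(b)} ψ(σ)`
(well-defined since `ω^M = 1`). -/
def Cop {ι : Type*} [Fintype ι] {M : ℕ} (u : ι → ZMod M) :
    Module.End ℂ (QuditSpace ι M) where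
  toFun ψ := fun σ => omegaM M ^ (∑ b, u b * σ b).val * ψ σ
  map_add' ψ φ := by funext σ; simp [mul_add]
  map_smul' c ψ := by funext σ; simp; ring

/-- The shift operator `S_u`: `(S_u ψ)(σ) = ψ(σ − u)`. -/
def Sop {ι : Type*} {M : ℕ} (u : ι → ZMod M) :
    Module.End ℂ (QuditSpace ι M) where
  toFun ψ := fun σ => ψ (σ - u)
  map_add' _ _ := rfl
  map_smul' _ _ := rfl

variable (M Lx Ly : ℕ)

/-- Vertices of the `L_x × L_y` square lattice on the torus. -/
abbrev Vertex := ZMod Lx × ZMod Ly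

/-- Bonds of the lattice: `((x,y), 0)` is the horizontal bond from `(x,y)` to
`(x+1,y)`, and `((x,y), 1)` the vertical bond from `(x,y)` to `(x,y+1)`. -/
abbrev Bond := (ZMod Lx × ZMod Ly) × Fin 2

variable [NeZero Lx] [NeZero Ly]

/-- The oriented star vector `u_v`: value `1` on `((x,y),0)` and `((x,y),1)`,
value `−1` on `((x−1,y),0)` and `((x,y−1),1)`, and `0` elsewhere. -/
def starVec (v : Vertex Lx Ly) : Bond Lx Ly → ZMod M := fun b =>
  (if b = (v, 0) then (1 : ZMod M) else 0) + (if b = (v, 1) then 1 else 0) +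
    (if b = ((v.1 - 1, v.2), 0) then -1 else 0) +
    (if b = ((v.1, v.2 - 1), 1) then -1 else 0)

/-- The oriented plaquette vector `w_{(x,y)}`: value `1` on `((x,y),0)` and
`((x+1,y),1)`, value `−1` on `((x,y+1),0)` and `((x,y),1)`, `0` elsewhere. -/
def plaqVec (v : Vertex Lx Ly) : Bond Lx Ly → ZMod M := fun b =>
  (if b = (v, 0) then (1 : ZMod M) else 0) +
    (if b = ((v.1 + 1, v.2), 1) then 1 else 0) +
    (if b = ((v.1, v.2 + 1), 0) then -1 else 0) +
    (if b = (v, 1) then -1 else 0)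

/-- The star operator `B̂_v = S_{u_v}`. -/
def Bhat (v : Vertex Lx Ly) : Module.End ℂ (QuditSpace (Bond Lx Ly) M) :=
  Sop (starVec M Lx Ly v)

/-- The plaquette operator `Â_{(x,y)} = C_{w_{(x,y)}}`. -/
def Ahat (v : Vertex Lx Ly) : Module.End ℂ (QuditSpace (Bond Lx Ly) M) :=
  Cop (plaqVec M Lx Ly v)

/-- The vertical clock Wilson loop `Ŵ_x = C_{𝟙_{Γ_x}}`,
`Γ_x = {((x,y),1) : y}`. -/
def What (x : ZMod Lx) : Module.End ℂ (QuditSpace (Bond Lx Ly) M) :=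
  Cop (fun b => if b.1.1 = x ∧ b.2 = 1 then (1 : ZMod M) else 0)

/-- The horizontal shift (dual) Wilson loop `V̂_y = S_{𝟙_{Γ̃_y}}`,
`Γ̃_y = {((x,y),1) : x}`. -/
def Vhat (y : ZMod Ly) : Module.End ℂ (QuditSpace (Bond Lx Ly) M) :=
  Sop (fun b => if b.1.2 = y ∧ b.2 = 1 then (1 : ZMod M) else 0)

/-- The basis vector at the all-zeros configuration. -/
def delta0M : QuditSpace (Bond Lx Ly) M := fun σ => if σ = 0 then 1 else 0

lemma sop_commute {ι : Type*} {M : ℕ} (u u' : ι → ZMod M) :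
    Commute (Sop u) (Sop u') := by
  apply LinearMap.ext; intro ψ; funext σ
  simp only [Module.End.mul_apply]
  show ψ (σ - u - u') = ψ (σ - u' - u)
  rw [sub_right_comm]

/-- The star projector `(1/M) ∑_{j=0}^{M−1} B̂_v^j`. -/
def starProjM (v : Vertex Lx Ly) :
    Module.End ℂ (QuditSpace (Bond Lx Ly) M) :=
  (M : ℂ)⁻¹ • ∑ j ∈ Finset.range M, (Bhat M Lx Ly v) ^ j

lemma starProjM_commute (v w : Vertex Lx Ly) :
    Commute (starProjM M Lx Ly v) (starProjM M Lx Ly w) := by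
  have h : Commute (Bhat M Lx Ly v) (Bhat M Lx Ly w) := sop_commute _ _
  have h' : Commute (∑ j ∈ Finset.range M, (Bhat M Lx Ly v) ^ j)
      (∑ j ∈ Finset.range M, (Bhat M Lx Ly w) ^ j) :=
    Commute.sum_left _ _ _ (fun j _ =>
      Commute.sum_right _ _ _ (fun k _ => h.pow_pow j k))
  exact (h'.smul_left _).smul_right _

/-- The (unnormalized) `ℤ_M` zero-flux ground state
`Φ_M = (∏_v (1/M) ∑_j B̂_v^j) δ₀` (the star operators commute, so the product
is well-defined). -/
def PhiM : QuditSpace (Bond Lx Ly) M :=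
  (Finset.univ.noncommProd (fun v : Vertex Lx Ly => starProjM M Lx Ly v)
    (fun v _ w _ _ => starProjM_commute M Lx Ly v w)) (delta0M M Lx Ly)

/-- The spectral projector `Π^x_m = (1/M) ∑_{l<M} ω^{−ml} (Ŵ_x)^l` of the
clock Wilson loop `Ŵ_x`. -/
def clockProj (x : ZMod Lx) (m : ℕ) :
    Module.End ℂ (QuditSpace (Bond Lx Ly) M) :=
  (M : ℂ)⁻¹ • ∑ l ∈ Finset.range M, (omegaM M ^ (m * l))⁻¹ • (What M Lx Ly x) ^ l

/-- The fractional power `Ŵ_x^{−a/M} = ∑_{m<M} exp(−2πi·a·m/M²) Π^x_m` used by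
a team holding the input `a`. -/
def WfracNeg (x : ZMod Lx) (a : ℕ) :
    Module.End ℂ (QuditSpace (Bond Lx Ly) M) :=
  ∑ m ∈ Finset.range M,
    Complex.exp (-(2 * Real.pi * Complex.I * a * m) / (M ^ 2 : ℕ)) •
      clockProj M Lx Ly x m

/-! Every state `V̂^k Φ_M` is a joint eigenvector of the clock Wilson loops. Each `Ŵ_x` commutes
with every star operator, since a column loop meets a star in two vertical bonds of opposite
orientation or not at all, and `Ŵ_x` fixes `δ₀`; hence `Ŵ_x Φ_M = Φ_M`. A column loop and a row
loop cross exactly once, so `Ŵ_x V̂^k = ω^k V̂^k Ŵ_x` and `Ŵ_x V̂^k Φ_M = ω^k V̂^k Φ_M`. By the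
orthogonality of the characters of `ℤ_M`, `Π^x_m` acts on `V̂^k Φ_M` as `δ_{mk}`, so
`Ŵ_x^{-a/M}` acts as the phase `exp(-2πi a k / M²)`, and the product of these phases is
`ω^{-kq}` because `∑ a_j = M q`. As `V̂^M = 1`, the twisted sum `∑_k ω^{-kq} V̂^k Φ_M` is an
`ω^q`-eigenvector of `V̂`. It is nonzero because `Π^x_0` maps it to `Φ_M`, whose amplitude at the
zero configuration is positive: the star projectors average over shifts, so they preserve
nonnegative amplitudes and keep the one at `0` positive. -/

section RootsOfUnity

variable {M}

lemma pow_val_add_of_pow_eq_one {G : Type*} [Monoid G] [NeZero M] {ζ : G} (hζ : ζ ^ M = 1)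
    (z w : ZMod M) : ζ ^ (z + w).val = ζ ^ z.val * ζ ^ w.val := by
  rw [ZMod.val_add, ← pow_eq_pow_mod _ hζ, pow_add]

lemma pow_val_natCast_of_pow_eq_one {G : Type*} [Monoid G] [NeZero M] {ζ : G}
    (hζ : ζ ^ M = 1) (k : ℕ) : ζ ^ (k : ZMod M).val = ζ ^ k := by
  rw [ZMod.val_natCast, ← pow_eq_pow_mod _ hζ]

lemma isPrimitiveRoot_omegaM (hM : M ≠ 0) : IsPrimitiveRoot (omegaM M) M :=
  Complex.isPrimitiveRoot_exp M hM

lemma omegaM_pow_self : omegaM M ^ M = 1 := by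
  rcases eq_or_ne M 0 with rfl | hM
  · exact pow_zero _
  · exact (isPrimitiveRoot_omegaM hM).pow_eq_one

lemma IsPrimitiveRoot.sum_range_inv_pow_mul_pow {K : Type*} [Field K] {ζ : K} {n m k : ℕ}
    (hζ : IsPrimitiveRoot ζ n) (hm : m < n) (hk : k < n) :
    ∑ l ∈ range n, (ζ ^ (m * l))⁻¹ * (ζ ^ k) ^ l = if m = k then (n : K) else 0 := by
  have hζ0 : ζ ≠ 0 := hζ.ne_zero (by omega)
  have hterm (l : ℕ) : (ζ ^ (m * l))⁻¹ * (ζ ^ k) ^ l = ((ζ ^ m)⁻¹ * ζ ^ k) ^ l := by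
    rw [mul_pow, pow_mul, inv_pow]
  simp_rw [hterm]
  split_ifs with hmk
  · simp [hmk, inv_mul_cancel₀ (pow_ne_zero k hζ0)]
  · have hne : (ζ ^ m)⁻¹ * ζ ^ k ≠ 1 := fun h =>
      hmk (hζ.pow_inj hm hk ((inv_mul_eq_one₀ (pow_ne_zero m hζ0)).mp h))
    have hpow : ((ζ ^ m)⁻¹ * ζ ^ k) ^ n = 1 := by
      rw [mul_pow, inv_pow, ← pow_mul, ← pow_mul, mul_comm m, mul_comm k, pow_mul, pow_mul,
        hζ.pow_eq_one, one_pow, one_pow, inv_one, one_mul]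
    rw [geom_sum_eq hne, hpow, sub_self, zero_div]

lemma prod_exp_neg_div_sq_eq_inv_omegaM_pow [NeZero M] {ι : Type*} [Fintype ι] (a : ι → ℕ)
    {q : ℕ} (hq : ∑ j, a j = M * q) (k : ℕ) :
    ∏ j, Complex.exp (-(2 * Real.pi * Complex.I * a j * k) / ((M ^ 2 : ℕ) : ℂ)) =
      (omegaM M ^ (k * q))⁻¹ := by
  have hM : (M : ℂ) ≠ 0 := Nat.cast_ne_zero.mpr (NeZero.ne M)
  have hterm (j : ι) : -(2 * Real.pi * Complex.I * a j * k) / ((M ^ 2 : ℕ) : ℂ) =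
      (a j : ℂ) * (-(2 * Real.pi * Complex.I * k) / ((M ^ 2 : ℕ) : ℂ)) := by ring
  rw [← Complex.exp_sum, omegaM, ← Complex.exp_nat_mul, ← Complex.exp_neg]
  simp_rw [hterm]
  rw [← sum_mul, ← Nat.cast_sum, hq]
  push_cast
  field_simp

end RootsOfUnity

section Operators

variable {ι : Type*} {M}

lemma sop_mul (u w : ι → ZMod M) : Sop u * Sop w = Sop (u + w) :=
  LinearMap.ext fun ψ => funext fun σ => congrArg ψ (sub_sub σ u w)

lemma sop_zero : Sop (0 : ι → ZMod M) = 1 :=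
  LinearMap.ext fun ψ => funext fun σ => congrArg ψ (sub_zero σ)

lemma sop_pow (u : ι → ZMod M) (k : ℕ) : Sop u ^ k = Sop (k • u) := by
  induction k with
  | zero => rw [pow_zero, zero_smul, sop_zero]
  | succ k ih => rw [pow_succ, ih, sop_mul, succ_nsmul]

lemma sop_pow_self (u : ι → ZMod M) : Sop u ^ M = 1 := by
  rw [sop_pow, ← sop_zero]
  congr 1
  funext b
  simp [nsmul_eq_mul]

variable [Fintype ι] [NeZero M]

lemma cop_sop_apply (u w : ι → ZMod M) (ψ : QuditSpace ι M) :
    Cop u (Sop w ψ) = omegaM M ^ (u ⬝ᵥ w).val • Sop w (Cop u ψ) := by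
  funext σ
  change omegaM M ^ (u ⬝ᵥ σ).val * ψ (σ - w) =
    omegaM M ^ (u ⬝ᵥ w).val * (omegaM M ^ (u ⬝ᵥ (σ - w)).val * ψ (σ - w))
  rw [← mul_assoc, ← pow_val_add_of_pow_eq_one omegaM_pow_self, ← dotProduct_add,
    add_sub_cancel]

lemma commute_cop_sop {u w : ι → ZMod M} (h : u ⬝ᵥ w = 0) : Commute (Cop u) (Sop w) :=
  LinearMap.ext fun ψ => by simpa [h] using cop_sop_apply u w ψ

end Operators

section Lattice

/-- `𝟙_{Γ_x}`, so that `Ŵ_x = C_{columnVec x}`. -/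
def columnVec (x : ZMod Lx) : Bond Lx Ly → ZMod M := fun b =>
  if b.1.1 = x ∧ b.2 = 1 then 1 else 0

/-- `𝟙_{Γ̃_y}`, so that `V̂_y = S_{rowVec y}`. -/
abbrev rowVec (y : ZMod Ly) : Bond Lx Ly → ZMod M := fun b =>
  if b.1.2 = y ∧ b.2 = 1 then 1 else 0

variable {M Lx Ly}

lemma what_eq_cop (x : ZMod Lx) : What M Lx Ly x = Cop (columnVec M Lx Ly x) := rfl

lemma columnVec_dotProduct_starVec (x : ZMod Lx) (v : Vertex Lx Ly) :
    columnVec M Lx Ly x ⬝ᵥ starVec M Lx Ly v = 0 := by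
  simp only [columnVec, starVec, dotProduct, mul_add, sum_add_distrib, mul_ite,
    mul_one, mul_zero, mul_neg]
  by_cases h : v.1 = x <;> simp [h]

lemma columnVec_dotProduct_rowVec (x : ZMod Lx) (y : ZMod Ly) :
    columnVec M Lx Ly x ⬝ᵥ rowVec M Lx Ly y = 1 := by
  have hcross : ∀ b : Bond Lx Ly,
      columnVec M Lx Ly x b * rowVec M Lx Ly y b = if b = ((x, y), 1) then 1 else 0 := by
    rintro ⟨⟨x', y'⟩, i⟩
    by_cases hx : x' = x <;> by_cases hy : y' = y <;> by_cases hi : i = 1 <;>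
      simp [columnVec, rowVec, hx, hy, hi]
  simp [dotProduct, hcross]

lemma cop_delta0M (u : Bond Lx Ly → ZMod M) : Cop u (delta0M M Lx Ly) = delta0M M Lx Ly := by
  funext σ
  by_cases h : σ = 0
  · subst h
    simp [Cop, delta0M]
  · simp [Cop, delta0M, h]

variable [NeZero M]

lemma what_phiM (x : ZMod Lx) : What M Lx Ly x (PhiM M Lx Ly) = PhiM M Lx Ly := by
  have hstar (v : Vertex Lx Ly) : Commute (What M Lx Ly x) (starProjM M Lx Ly v) :=
    ((Commute.sum_right _ _ _ fun j _ =>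
      (commute_cop_sop (columnVec_dotProduct_starVec x v)).pow_right j)).smul_right _
  have hcomm := Finset.noncommProd_commute univ (fun v => starProjM M Lx Ly v)
    (fun v _ w _ _ => starProjM_commute M Lx Ly v w) _ fun v _ => hstar v
  rw [PhiM, ← Module.End.mul_apply, hcomm.eq, Module.End.mul_apply, what_eq_cop, cop_delta0M]

lemma what_vhat_pow_phiM (x : ZMod Lx) (y : ZMod Ly) (k : ℕ) :
    What M Lx Ly x ((Vhat M Lx Ly y ^ k) (PhiM M Lx Ly)) =
      omegaM M ^ k • (Vhat M Lx Ly y ^ k) (PhiM M Lx Ly) := by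
  rw [Vhat, sop_pow, what_eq_cop, cop_sop_apply, dotProduct_smul,
    columnVec_dotProduct_rowVec, nsmul_one, pow_val_natCast_of_pow_eq_one omegaM_pow_self,
    ← what_eq_cop, what_phiM]

end Lattice

section Spectral

variable {M Lx Ly}

lemma pow_apply_of_apply_eq_smul {R V : Type*} [CommSemiring R] [AddCommMonoid V] [Module R V]
    {f : Module.End R V} {μ : R} {v : V} (h : f v = μ • v) (n : ℕ) :
    (f ^ n) v = μ ^ n • v := by
  induction n with
  | zero => simp
  | succ n ih => rw [pow_succ', Module.End.mul_apply, ih, map_smul, h, smul_smul, pow_succ]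

lemma List.prod_ofFn_apply_of_apply_eq_smul {R V : Type*} [CommSemiring R] [AddCommMonoid V]
    [Module R V] {n : ℕ} (f : Fin n → Module.End R V) (c : Fin n → R) {v : V}
    (h : ∀ j, f j v = c j • v) : (List.ofFn f).prod v = (∏ j, c j) • v := by
  induction n with
  | zero => simp
  | succ n ih =>
    rw [List.ofFn_succ, List.prod_cons, Module.End.mul_apply,
      ih (fun j => f j.succ) (fun j => c j.succ) fun j => h j.succ, map_smul, h 0, smul_smul,
      Fin.prod_univ_succ, mul_comm]

variable [NeZero M]

lemma clockProj_apply_of_eigen {x : ZMod Lx} {v : QuditSpace (Bond Lx Ly) M} {m k : ℕ}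
    (hm : m < M) (hk : k < M) (hv : What M Lx Ly x v = omegaM M ^ k • v) :
    clockProj M Lx Ly x m v = if m = k then v else 0 := by
  have hexpand : clockProj M Lx Ly x m v =
      ((M : ℂ)⁻¹ * ∑ l ∈ range M, (omegaM M ^ (m * l))⁻¹ * (omegaM M ^ k) ^ l) • v := by
    simp only [clockProj, LinearMap.smul_apply, LinearMap.sum_apply,
      pow_apply_of_apply_eq_smul hv, smul_smul, ← Finset.sum_smul]
  rw [hexpand, (isPrimitiveRoot_omegaM (NeZero.ne M)).sum_range_inv_pow_mul_pow hm hk]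
  split_ifs
  · rw [inv_mul_cancel₀ (Nat.cast_ne_zero.mpr (NeZero.ne M)), one_smul]
  · rw [mul_zero, zero_smul]

lemma wfracNeg_apply_of_eigen {x : ZMod Lx} {v : QuditSpace (Bond Lx Ly) M} (a : ℕ) {k : ℕ}
    (hk : k < M) (hv : What M Lx Ly x v = omegaM M ^ k • v) :
    WfracNeg M Lx Ly x a v =
      Complex.exp (-(2 * Real.pi * Complex.I * a * k) / ((M ^ 2 : ℕ) : ℂ)) • v := by
  simp only [WfracNeg, LinearMap.sum_apply, LinearMap.smul_apply]
  rw [sum_eq_single_of_mem k (mem_range.mpr hk), clockProj_apply_of_eigen hk hk hv, if_pos rfl]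
  intro m hm hne
  rw [clockProj_apply_of_eigen (mem_range.mp hm) hk hv, if_neg hne, smul_zero]

lemma wfracNeg_prod_apply_vhat_pow_phiM (y : ZMod Ly) {T : ℕ} (x : Fin T → ZMod Lx)
    (a : Fin T → ℕ) {q : ℕ} (hq : ∑ j, a j = M * q) {k : ℕ} (hk : k < M) :
    (List.ofFn fun j => WfracNeg M Lx Ly (x j) (a j)).prod ((Vhat M Lx Ly y ^ k) (PhiM M Lx Ly)) =
      (omegaM M ^ (k * q))⁻¹ • (Vhat M Lx Ly y ^ k) (PhiM M Lx Ly) := by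
  rw [List.prod_ofFn_apply_of_apply_eq_smul _ _ fun j =>
      wfracNeg_apply_of_eigen (a j) hk (what_vhat_pow_phiM (x j) y k),
    prod_exp_neg_div_sq_eq_inv_omegaM_pow a hq]

lemma clockProj_zero_apply_sum (x : ZMod Lx) (y : ZMod Ly) (c : ℕ → ℂ) :
    clockProj M Lx Ly x 0 (∑ k ∈ range M, c k • (Vhat M Lx Ly y ^ k) (PhiM M Lx Ly)) =
      c 0 • PhiM M Lx Ly := by
  have hproj {k : ℕ} (hk : k ∈ range M) :
      clockProj M Lx Ly x 0 ((Vhat M Lx Ly y ^ k) (PhiM M Lx Ly)) =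
        if 0 = k then (Vhat M Lx Ly y ^ k) (PhiM M Lx Ly) else 0 :=
    clockProj_apply_of_eigen (NeZero.pos M) (mem_range.mp hk) (what_vhat_pow_phiM x y k)
  rw [map_sum, sum_eq_single_of_mem 0 (mem_range.mpr (NeZero.pos M))]
  · rw [map_smul, hproj (mem_range.mpr (NeZero.pos M)), if_pos rfl, pow_zero,
      Module.End.one_apply]
  · intro k hk hne
    rw [map_smul, hproj hk, if_neg (Ne.symm hne), smul_zero]

end Spectral

lemma Module.End.apply_sum_range_inv_pow_smul_pow_apply {K V : Type*} [Field K]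
    [AddCommGroup V] [Module K V] {A : Module.End K V} {c : K} {n : ℕ} (hA : A ^ n = 1)
    (hc : c ^ n = 1) (φ : V) :
    A (∑ k ∈ range n, (c ^ k)⁻¹ • (A ^ k) φ) = c • ∑ k ∈ range n, (c ^ k)⁻¹ • (A ^ k) φ := by
  rcases eq_or_ne n 0 with rfl | hn
  · simp
  have hc0 : c ≠ 0 := fun h => by simp [h, hn] at hc
  set F : ℕ → V := fun k => (c ^ k)⁻¹ • (A ^ k) φ with hF
  have hstep (k : ℕ) : A (F k) = c • F (k + 1) := by
    rw [hF, map_smul, ← Module.End.mul_apply, ← pow_succ', smul_smul, pow_succ c k, mul_inv,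
      mul_left_comm, mul_inv_cancel₀ hc0, mul_one]
  have hperiod : F n = F 0 := by simp [hF, hA, hc]
  have hshift : ∑ k ∈ range n, F (k + 1) = ∑ k ∈ range n, F k := by
    have h := (sum_range_succ' F n).symm.trans (sum_range_succ F n)
    rwa [hperiod, add_left_inj] at h
  rw [map_sum, sum_congr rfl fun k _ => hstep k, ← smul_sum, hshift]

section Positivity

open scoped ComplexOrder

variable {ι : Type*} {M}

/-- Under `ComplexOrder`, `0 ≤ z` means that `z` is a nonnegative real. -/
def nonnegPosAtZero : Set (QuditSpace ι M) := {ψ | 0 ≤ ψ ∧ 0 < ψ 0}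

lemma mapsTo_sop_average [NeZero M] (u : ι → ZMod M) :
    Set.MapsTo ((M : ℂ)⁻¹ • ∑ j ∈ range M, Sop u ^ j) nonnegPosAtZero nonnegPosAtZero := by
  rintro ψ ⟨hψ, hψ0⟩
  have happly (σ : ι → ZMod M) : ((M : ℂ)⁻¹ • ∑ j ∈ range M, Sop u ^ j) ψ σ =
      (M : ℂ)⁻¹ * ∑ j ∈ range M, ψ (σ - j • u) := by
    simp only [LinearMap.smul_apply, LinearMap.sum_apply, sop_pow, Pi.smul_apply,
      Finset.sum_apply, smul_eq_mul]
    rfl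
  have hM : (0 : ℂ) < (M : ℂ)⁻¹ := by
    rw [← Complex.ofReal_natCast, ← Complex.ofReal_inv, Complex.zero_lt_real]
    exact inv_pos.mpr (Nat.cast_pos.mpr (NeZero.pos M))
  refine ⟨fun σ => ?_, ?_⟩
  · rw [happly]
    exact mul_nonneg hM.le (sum_nonneg fun j _ => hψ _)
  · rw [happly]
    exact mul_pos hM (sum_pos' (fun j _ => hψ _) ⟨0, mem_range.mpr (NeZero.pos M), by simpa⟩)

variable {Lx Ly}

lemma delta0M_mem_nonnegPosAtZero : delta0M M Lx Ly ∈ nonnegPosAtZero := by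
  refine ⟨fun σ => ?_, by simp [delta0M]⟩
  by_cases h : σ = 0 <;> simp [delta0M, h]

lemma phiM_ne_zero [NeZero M] : PhiM M Lx Ly ≠ 0 := by
  have hmaps : Set.MapsTo (univ.noncommProd (fun v => starProjM M Lx Ly v)
      (fun v _ w _ _ => starProjM_commute M Lx Ly v w) :
        Module.End ℂ (QuditSpace (Bond Lx Ly) M)) nonnegPosAtZero nonnegPosAtZero :=
    Finset.noncommProd_induction _ _ _
      (fun A : Module.End ℂ (QuditSpace (Bond Lx Ly) M) =>
        Set.MapsTo A nonnegPosAtZero nonnegPosAtZero)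
      (fun _ _ => Set.MapsTo.comp) (fun _ h => h)
      (fun v _ => mapsTo_sop_average (starVec M Lx Ly v))
  have hmem : PhiM M Lx Ly ∈ nonnegPosAtZero := hmaps delta0M_mem_nonnegPosAtZero
  exact fun h => hmem.2.ne' (congrFun h 0)

end Positivity

theorem ZM_toric_code_strategy_wins_general (M Lx Ly : ℕ) [NeZero Lx] [NeZero Ly]
    (hM : 2 ≤ M) (y₀ : ZMod Ly)
    (T : ℕ) (x : Fin T → ZMod Lx)
    (a : Fin T → ℕ) (hdvd : M ∣ ∑ j, a j) :
    let q : ℕ := (∑ j, a j) / M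
    let Ψ : QuditSpace (Bond Lx Ly) M :=
      ∑ k ∈ Finset.range M, ((Vhat M Lx Ly y₀) ^ k) (PhiM M Lx Ly)
    let ψ' : QuditSpace (Bond Lx Ly) M :=
      ((List.ofFn fun j => WfracNeg M Lx Ly (x j) (a j)).prod) Ψ
    ψ' = ∑ k ∈ Finset.range M,
          (omegaM M ^ (k * q))⁻¹ • ((Vhat M Lx Ly y₀) ^ k) (PhiM M Lx Ly) ∧
      ψ' ≠ 0 ∧
      Vhat M Lx Ly y₀ ψ' = (omegaM M ^ q) • ψ' := by
  intro q Ψ ψ'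
  have : NeZero M := ⟨by omega⟩
  have hq : ∑ j, a j = M * q := (Nat.mul_div_cancel' hdvd).symm
  have hψ' : ψ' = ∑ k ∈ range M,
      (omegaM M ^ (k * q))⁻¹ • (Vhat M Lx Ly y₀ ^ k) (PhiM M Lx Ly) := by
    simp only [ψ', Ψ, map_sum]
    exact sum_congr rfl fun k hk =>
      wfracNeg_prod_apply_vhat_pow_phiM y₀ x a hq (mem_range.mp hk)
  refine ⟨hψ', fun hzero => phiM_ne_zero (M := M) (Lx := Lx) (Ly := Ly) ?_, ?_⟩
  · have hproj := clockProj_zero_apply_sum (M := M) (Lx := Lx) 0 y₀ fun k => (omegaM M ^ (k * q))⁻¹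
    rwa [← hψ', hzero, map_zero, zero_mul, pow_zero, inv_one, one_smul, eq_comm] at hproj
  · simp_rw [hψ', pow_mul']
    exact Module.End.apply_sum_range_inv_pow_smul_pow_apply (sop_pow_self _)
      (by rw [← pow_mul, mul_comm, pow_mul, omegaM_pow_self, one_pow]) _

/-- with `V̂ = V̂_{y₀}` and the unnormalized `ℤ_M` topological cat
state `Ψ = ∑_{k<M} V̂^k Φ_M`, for any `T ≥ 3`, distinct columns `x_1, …, x_T`
and input `a : Fin T → {0,…,M−1}` with `M ∣ ∑_j a_j` and `q = (∑_j a_j)/M`,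
the post-strategy state `ψ' = (∏_j Ŵ_{x_j}^{−a_j/M}) Ψ` equals
`∑_{k<M} ω^{−kq} V̂^k Φ_M`, is nonzero, and satisfies `V̂ ψ' = ω^q ψ'`; hence
the quantum strategy wins the `ℤ_M` toric code game with certainty. -/
theorem ZM_toric_code_strategy_wins (M Lx Ly : ℕ) [NeZero Lx] [NeZero Ly]
    (hM : 2 ≤ M) (hLx : 2 ≤ Lx) (hLy : 2 ≤ Ly) (y₀ : ZMod Ly)
    (T : ℕ) (hT : 3 ≤ T) (x : Fin T → ZMod Lx) (hx : Function.Injective x)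
    (a : Fin T → ℕ) (ha : ∀ j, a j < M) (hdvd : M ∣ ∑ j, a j) :
    let q : ℕ := (∑ j, a j) / M
    let Ψ : QuditSpace (Bond Lx Ly) M :=
      ∑ k ∈ Finset.range M, ((Vhat M Lx Ly y₀) ^ k) (PhiM M Lx Ly)
    let ψ' : QuditSpace (Bond Lx Ly) M :=
      ((List.ofFn fun j => WfracNeg M Lx Ly (x j) (a j)).prod) Ψ
    ψ' = ∑ k ∈ Finset.range M,
          (omegaM M ^ (k * q))⁻¹ • ((Vhat M Lx Ly y₀) ^ k) (PhiM M Lx Ly) ∧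
      ψ' ≠ 0 ∧
      Vhat M Lx Ly y₀ ψ' = (omegaM M ^ q) • ψ' :=
  ZM_toric_code_strategy_wins_general M Lx Ly hM y₀ T x a hdvd
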